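/- arXiv:1006.5752 — 6 statements merged into one kernel-verified Lean document; each statement's English description precedes it below -/
import Mathlib

section
/- A finite cyclic group G has no nonzero Brauer relations: if ∑_H n_H H is a Brauer relation in a cyclic group G, then n_H = 0 for every subgroup H ≤ G. -/
/-- The value at `g` of the character of the permutation representation of `G`
on the coset space `G ⧸ H`, i.e. `Ind_H^G 1_H (g) = |{x ∈ G/H : g • x = x}|`. -/
noncomputable def indTrivChar {G : Type*} [Group G] (H : Subgroup G) (g : G) : ℤ :=
  Nat.card {x : G ⧸ H // g • x = x}

/-- A formal `ℤ`-linear combination of subgroups of `G` is a Brauer relation if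
`∑_H n_H Ind_H^G 1_H = 0`. -/
def IsBrauerRelation {G : Type*} [Group G] (c : Subgroup G →₀ ℤ) : Prop :=
  ∀ g : G, (c.sum fun H n => n * indTrivChar H g) = 0

/-- A group is `p`-quasi-elementary if it has a cyclic normal subgroup of `p`-power index. -/
def IsPQuasiElementary (p : ℕ) (G : Type*) [Group G] : Prop :=
  ∃ C : Subgroup G, C.Normal ∧ IsCyclic C ∧ ∃ k : ℕ, C.index = p ^ k

/-- A group is quasi-elementary if it is `p`-quasi-elementary for some prime `p`. -/
def IsQuasiElementary (G : Type*) [Group G] : Prop :=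
  ∃ p : ℕ, p.Prime ∧ IsPQuasiElementary p G

open scoped Classical in
lemma indTrivChar_eq {G : Type*} [Group G] (hcomm : ∀ a b : G, a * b = b * a)
    (H : Subgroup G) (g : G) :
    indTrivChar H g = if g ∈ H then (H.index : ℤ) else 0 := by
  unfold indTrivChar
  split_ifs with hg
  · have hall : ∀ x : G ⧸ H, g • x = x := by
      intro x
      induction x using QuotientGroup.induction_on with
      | _ z =>
        show ((g * z : G) : G ⧸ H) = z
        rw [QuotientGroup.eq]
        have : (g * z)⁻¹ * z = g⁻¹ := by
          rw [mul_inv_rev, mul_assoc, hcomm g⁻¹ z]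
          group
        rw [this]
        exact H.inv_mem hg
    rw [Nat.card_congr (Equiv.subtypeUnivEquiv hall)]
    rfl
  · have : IsEmpty {x : G ⧸ H // g • x = x} := by
      constructor
      rintro ⟨x, hx⟩
      induction x using QuotientGroup.induction_on with
      | _ z =>
        have hx' : ((g * z : G) : G ⧸ H) = z := hx
        rw [QuotientGroup.eq] at hx'
        have : (g * z)⁻¹ * z = g⁻¹ := by
          rw [mul_inv_rev, mul_assoc, hcomm g⁻¹ z]
          group
        rw [this] at hx'
        exact hg (inv_inv g ▸ H.inv_mem hx')
    simp [Nat.card_of_isEmpty]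

/-- A finite cyclic group has no nonzero Brauer relations. -/
theorem brauer_relation_of_cyclic_eq_zero (G : Type*) [Group G] [Finite G] [IsCyclic G]
    (c : Subgroup G →₀ ℤ) (hc : IsBrauerRelation c) :
    ∀ H : Subgroup G, c H = 0 := by
    classical
  have hcomm : ∀ a b : G, a * b = b * a := fun a b =>
    (IsCyclic.commGroup (α := G)).mul_comm a b
  intro H
  induction H using ((IsWellFounded.wf : WellFounded ((· > ·) : Subgroup G → Subgroup G → Prop)).induction) with
  | _ H IH =>
    -- get a generator g of H
    obtain ⟨⟨g, hgH⟩, hgen⟩ := IsCyclic.exists_generator (α := H)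
    have hHz : H = Subgroup.zpowers g := by
      apply le_antisymm
      · intro x hx
        obtain ⟨n, hn⟩ := hgen ⟨x, hx⟩
        exact ⟨n, congrArg Subtype.val hn⟩
      · exact (Subgroup.zpowers_le).2 hgH
    have hmem : ∀ K : Subgroup G, g ∈ K ↔ H ≤ K := by
      intro K
      rw [hHz, ← Subgroup.zpowers_le]
    have h0 := hc g
    rw [Finsupp.sum] at h0
    have hterm : ∀ K : Subgroup G, c K * indTrivChar K g
        = c K * (if H ≤ K then (K.index : ℤ) else 0) := by
      intro K
      rw [indTrivChar_eq hcomm]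
      by_cases h : g ∈ K
      · rw [if_pos h, if_pos ((hmem K).1 h)]
      · rw [if_neg h, if_neg (fun hle => h ((hmem K).2 hle))]
    rw [Finset.sum_congr rfl (fun K _ => hterm K)] at h0
    rw [Finset.sum_eq_single H (fun K _ hKH => ?_) (fun hH => ?_)] at h0
    · rw [if_pos le_rfl] at h0
      have hidx : (H.index : ℤ) ≠ 0 := by
        exact_mod_cast Subgroup.index_ne_zero_of_finite
      exact (mul_eq_zero.1 h0).resolve_right hidx
    · by_cases hle : H ≤ K
      · have : H < K := lt_of_le_of_ne hle (Ne.symm hKH)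
        rw [IH K this, zero_mul]
      · rw [if_neg hle, mul_zero]
    · rw [Finsupp.notMem_support_iff.1 hH, zero_mul]
end

section
/- Let G be a finite group that is p-quasi-elementary for a prime p and not cyclic. Then p·1_G is a ℤ-linear combination of the induced characters Ind_H^G 1_H over proper subgroups H < G. -/
/-!
Induction on `|G|`. If some `G ⧸ K` with `K ≠ ⊥` is not cyclic, it is again `p`-quasi-elementary
and a relation for it inflates along `G → G ⧸ K`; so assume all such quotients are cyclic. Let `A`
be the `p'`-part of the cyclic normal subgroup, so that `G ⧸ A` is a cyclic `p`-group.

If `A = ⊥`, then `G` is a `p`-group with cyclic quotient by its centre, hence abelian, and the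
cyclicity of its quotients forces `|G| = p²`. There `∑_L Ind_L 1 - Ind_⊥ 1 = p`, the sum running
over the `p + 1` subgroups of order `p`.

If `A ≠ ⊥`, Schur–Zassenhaus gives a complement `P`. A nontrivial element of `A` centralising `P`
would be central, making `G` abelian and then cyclic; so `P` acts on `A` without fixed points.
Then `P` is self-normalising and, for the index-`p` normal subgroup `N ⊇ A`, every `g ∉ N` is
conjugate to a generator of `P`, so `Ind_P 1 (g) = 1`; on `N`, `Ind_{P ⊓ N} 1 = p • Ind_P 1`.
Hence `Ind_N 1 + p • Ind_P 1 - Ind_{P ⊓ N} 1 = p`.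
-/

open Subgroup

section PermutationCharacter

variable {G : Type*} [Group G]

theorem smul_mk_eq_mk_iff (H : Subgroup G) (g x : G) :
    g • (x : G ⧸ H) = x ↔ x⁻¹ * g * x ∈ H := by
  change ((g * x : G) : G ⧸ H) = x ↔ _
  rw [QuotientGroup.eq, ← H.inv_mem_iff]
  simp [mul_assoc]

theorem card_conj_mem_eq_card_mul_indTrivChar (H : Subgroup G) (g : G) :
    (Nat.card {x : G // x⁻¹ * g * x ∈ H} : ℤ) = Nat.card H * indTrivChar H g := by
  have hset : {x : G | x⁻¹ * g * x ∈ H} = QuotientGroup.mk ⁻¹' {q : G ⧸ H | g • q = q} := by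
    ext x
    exact (smul_mk_eq_mk_iff H g x).symm
  rw [indTrivChar, ← Nat.cast_mul, ← Nat.card_prod]
  exact congrArg _ (Nat.card_congr ((Equiv.setCongr hset).trans
    (QuotientGroup.preimageMkEquivSubgroupProdSet H _)))

theorem indTrivChar_of_mem_normal {N : Subgroup G} [N.Normal] {g : G} (hg : g ∈ N) :
    indTrivChar N g = N.index := by
  have hfix : ∀ q : G ⧸ N, g • q = q := fun q => by
    induction q using QuotientGroup.induction_on with
    | _ x => exact (smul_mk_eq_mk_iff N g x).mpr (by simpa using Normal.conj_mem' ‹_› g hg x)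
  rw [indTrivChar, index_eq_card, Nat.card_congr (Equiv.subtypeUnivEquiv hfix)]

theorem indTrivChar_eq_zero_of_le_normal {H N : Subgroup G} [N.Normal] (hHN : H ≤ N) {g : G}
    (hg : g ∉ N) : indTrivChar H g = 0 := by
  have : IsEmpty {q : G ⧸ H // g • q = q} := ⟨fun ⟨q, hq⟩ => by
    induction q using QuotientGroup.induction_on with
    | _ x =>
      have hconj := Normal.conj_mem ‹_› _ (hHN ((smul_mk_eq_mk_iff H g x).mp hq)) x
      exact hg (by simpa [mul_assoc] using hconj)⟩
  simp [indTrivChar]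

theorem orderOf_inv_mul_mul (g x : G) : orderOf (x⁻¹ * g * x) = orderOf g :=
  SemiconjBy.orderOf_eq x (by simp [SemiconjBy, mul_assoc])

theorem indTrivChar_inf_of_mem_normal [Finite G] (P : Subgroup G) {N : Subgroup G} [N.Normal]
    {g : G} (hg : g ∈ N) : indTrivChar (P ⊓ N) g = N.relIndex P * indTrivChar P g := by
  have hcard : (Nat.card P : ℤ) = Nat.card ↥(P ⊓ N) * N.relIndex P := by
    rw [← inf_relIndex_right, inf_comm, ← relIndex_bot_left, ← relIndex_bot_left,
      ← Nat.cast_mul, relIndex_mul_relIndex _ _ _ bot_le inf_le_right]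
  have hconj : ∀ x : G, x⁻¹ * g * x ∈ P ⊓ N ↔ x⁻¹ * g * x ∈ P := fun x =>
    and_iff_left (by simpa using Normal.conj_mem' ‹_› g hg x)
  have key := card_conj_mem_eq_card_mul_indTrivChar (P ⊓ N) g
  rw [Nat.card_congr (Equiv.subtypeEquivRight hconj), card_conj_mem_eq_card_mul_indTrivChar,
    hcard, mul_assoc] at key
  exact (mul_left_cancel₀ (by exact_mod_cast Nat.card_pos.ne') key).symm

theorem indTrivChar_eq_one_of_zpowers_conj_eq [Finite G] {H : Subgroup G}
    (hH : normalizer (H : Set G) ≤ H) {g x : G} (hx : zpowers (x⁻¹ * g * x) = H) :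
    indTrivChar H g = 1 := by
  have hfix : g • (x : G ⧸ H) = x := (smul_mk_eq_mk_iff H g x).mpr (hx ▸ mem_zpowers _)
  rw [indTrivChar, Nat.cast_eq_one, Nat.card_eq_one_iff_exists]
  refine ⟨⟨x, hfix⟩, fun ⟨q, hq⟩ => ?_⟩
  induction q using QuotientGroup.induction_on with
  | _ y =>
  have hyH := (smul_mk_eq_mk_iff H g y).mp hq
  have hy : zpowers (y⁻¹ * g * y) = H := by
    refine eq_of_le_of_card_ge (zpowers_le.mpr hyH) ?_
    rw [← hx, Nat.card_zpowers, Nat.card_zpowers, orderOf_inv_mul_mul, orderOf_inv_mul_mul]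
  -- conjugation by `x⁻¹ * y` maps the generator `y⁻¹ * g * y` of `H` to its generator `x⁻¹ * g * x`
  have hnorm : x⁻¹ * y ∈ normalizer (H : Set G) := mem_normalizer_fintype fun n hn => by
    rw [SetLike.mem_coe, ← hy] at hn
    obtain ⟨k, rfl⟩ := mem_zpowers_iff.mp hn
    rw [SetLike.mem_coe, ← conj_zpow, show x⁻¹ * y * (y⁻¹ * g * y) * (x⁻¹ * y)⁻¹ = x⁻¹ * g * x by
      group, ← hx]
    exact zpow_mem (mem_zpowers _) k
  exact Subtype.ext (QuotientGroup.eq.mpr (hH hnorm)).symm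

theorem indTrivChar_comap {G' : Type*} [Group G'] {f : G →* G'} (hf : Function.Surjective f)
    (H' : Subgroup G') (g : G) :
    indTrivChar (H'.comap f) g = indTrivChar H' (f g) := by
  let e : G ⧸ H'.comap f → G' ⧸ H' := Quotient.map' f fun a b hab => by
    rw [QuotientGroup.leftRel_apply, mem_comap, map_mul, map_inv] at hab
    exact QuotientGroup.leftRel_apply.mpr hab
  have he : ∀ x : G, e x = (f x : G' ⧸ H') := fun _ => rfl
  have hbij : Function.Bijective e := by
    refine ⟨fun a b hab => ?_, fun q => ?_⟩
    · induction a using QuotientGroup.induction_on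
      induction b using QuotientGroup.induction_on
      rw [he, he, QuotientGroup.eq, ← map_inv, ← map_mul] at hab
      exact QuotientGroup.eq.mpr hab
    · induction q using QuotientGroup.induction_on with
      | _ y => obtain ⟨x, rfl⟩ := hf y; exact ⟨x, rfl⟩
  have hequiv : ∀ q, e (g • q) = f g • e q := fun q => by
    induction q using QuotientGroup.induction_on with
    | _ x => change ((f (g * x) : G') : G' ⧸ H') = ((f g * f x : G') : G' ⧸ H'); rw [map_mul]
  refine congrArg _ (Nat.card_congr ((Equiv.ofBijective e hbij).subtypeEquiv fun q => ?_))
  simp only [Equiv.ofBijective_apply, ← hequiv, hbij.1.eq_iff]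

end PermutationCharacter

/-- `n • 1_G = ∑_H c_H Ind_H^G 1_H` for some `c` supported on proper subgroups `H`. -/
def IsCombOfProperInductions (G : Type*) [Group G] (n : ℤ) : Prop :=
  ∃ c : Subgroup G →₀ ℤ, c ⊤ = 0 ∧
    Finsupp.linearCombination ℤ (fun H : Subgroup G => indTrivChar H) c = fun _ => n

theorem IsCombOfProperInductions.of_surjective {G G' : Type*} [Group G] [Group G'] {f : G →* G'}
    (hf : Function.Surjective f) {n : ℤ} (h : IsCombOfProperInductions G' n) :
    IsCombOfProperInductions G n := by
  obtain ⟨c, htop, hc⟩ := h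
  refine ⟨c.mapDomain (comap f), ?_, ?_⟩
  · rw [← comap_top f, Finsupp.mapDomain_apply (comap_injective hf), htop]
  · rw [Finsupp.linearCombination_mapDomain]
    have := congrArg (LinearMap.funLeft ℤ ℤ f) hc
    rw [Finsupp.apply_linearCombination] at this
    convert this using 2
    · ext H g
      simp [indTrivChar_comap hf]
    · rfl

theorem isCombOfProperInductions_of_relIndex_eq_index {G : Type*} [Group G] [Finite G]
    {N P : Subgroup G} [N.Normal] (hN : N ≠ ⊤) (hP : P ≠ ⊤) (hrel : N.relIndex P = N.index)
    (hval : ∀ g ∉ N, indTrivChar P g = 1) : IsCombOfProperInductions G N.index := by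
  refine ⟨Finsupp.single N 1 + Finsupp.single P (N.index : ℤ) - Finsupp.single (P ⊓ N) 1,
    ?_, ?_⟩
  · have hPN : P ⊓ N ≠ ⊤ := ne_top_of_le_ne_top hN inf_le_right
    simp [hN.symm, hP.symm, hPN.symm]
  · ext g
    simp only [map_sub, map_add, Finsupp.linearCombination_single, Pi.sub_apply, Pi.add_apply,
      Pi.smul_apply, smul_eq_mul, one_mul]
    by_cases hg : g ∈ N
    · rw [indTrivChar_of_mem_normal hg, indTrivChar_inf_of_mem_normal P hg, hrel]
      ring
    · rw [indTrivChar_eq_zero_of_le_normal le_rfl hg, hval g hg,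
        indTrivChar_eq_zero_of_le_normal inf_le_right hg]
      ring

section PrimeSquare
variable {Q : Type*} [Group Q] {p : ℕ}

theorem zpowers_eq_of_card_eq_prime [Finite Q] (hp : p.Prime) {H : Subgroup Q}
    (hH : Nat.card H = p) {g : Q} (hgH : g ∈ H) (hg : g ≠ 1) : zpowers g = H := by
  refine eq_of_le_of_card_ge (zpowers_le.mpr hgH) ?_
  rw [Nat.card_zpowers, hH]
  have := (Nat.dvd_prime hp).mp (hH ▸ Subgroup.orderOf_dvd_natCard H hgH)
  exact (this.resolve_left (by simpa using hg)).ge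

theorem card_eq_and_mem_iff_eq_zpowers [Finite Q] (hp : p.Prime)
    (hord : ∀ g : Q, g ≠ 1 → orderOf g = p) {g : Q} (hg : g ≠ 1) (H : Subgroup Q) :
    Nat.card H = p ∧ g ∈ H ↔ H = zpowers g := by
  refine ⟨fun ⟨hH, hgH⟩ => (zpowers_eq_of_card_eq_prime hp hH hgH hg).symm, ?_⟩
  rintro rfl
  exact ⟨by rw [Nat.card_zpowers, hord g hg], mem_zpowers g⟩

theorem card_subgroups_card_eq_prime [Finite Q] [Fintype (Subgroup Q)] (hp : p.Prime)
    (hcard : Nat.card Q = p ^ 2) (hord : ∀ g : Q, g ≠ 1 → orderOf g = p) :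
    (Finset.univ.filter fun H : Subgroup Q => Nat.card H = p).card = p + 1 := by
  classical
  have := Fintype.ofFinite Q
  set L := Finset.univ.filter fun H : Subgroup Q => Nat.card H = p
  have hmaps : ∀ g ∈ Finset.univ.erase (1 : Q), zpowers g ∈ L := fun g hg => by
    simp only [L, Finset.mem_filter, Finset.mem_univ, true_and, Nat.card_zpowers]
    exact hord g (Finset.ne_of_mem_erase hg)
  have hfiber : ∀ H ∈ L,
      ((Finset.univ.erase (1 : Q)).filter fun g => zpowers g = H).card = p - 1 := fun H hH => by
    have hH : Nat.card H = p := (Finset.mem_filter.mp hH).2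
    have : ((Finset.univ.erase (1 : Q)).filter fun g => zpowers g = H) =
        (Finset.univ.filter (· ∈ H)).erase 1 := by
      ext g
      simp only [Finset.mem_filter, Finset.mem_erase, Finset.mem_univ, and_true, true_and]
      exact ⟨fun ⟨hg, hgH⟩ => ⟨hg, hgH ▸ mem_zpowers g⟩,
        fun ⟨hg, hgH⟩ => ⟨hg, zpowers_eq_of_card_eq_prime hp hH hgH hg⟩⟩
    rw [this, Finset.card_erase_of_mem (by simp [one_mem]), ← hH, Nat.card_eq_fintype_card,
      ← Fintype.card_subtype]
  -- each of the `p ^ 2 - 1` nontrivial elements lies in exactly one subgroup of order `p`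
  have key := Finset.card_eq_sum_card_fiberwise hmaps
  rw [Finset.sum_congr rfl hfiber, Finset.sum_const, smul_eq_mul, Finset.card_erase_of_mem
    (Finset.mem_univ _), Finset.card_univ, ← Nat.card_eq_fintype_card, hcard] at key
  have hp1 := hp.one_lt
  have : (p + 1) * (p - 1) = L.card * (p - 1) := by
    rw [← key, ← Nat.sq_sub_sq, one_pow]
  exact (Nat.eq_of_mul_eq_mul_right (by omega) this).symm

theorem orderOf_eq_prime_of_card_eq_prime_sq (hp : p.Prime) (hcard : Nat.card Q = p ^ 2)
    (hnc : ¬ IsCyclic Q) (g : Q) (hg : g ≠ 1) : orderOf g = p :=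
  ((Nat.dvd_prime hp).mp ((not_isCyclic_iff_exponent_eq_prime hp hcard).mp hnc ▸
    Monoid.order_dvd_exponent g)).resolve_left (by simpa using hg)

theorem isCombOfProperInductions_of_card_eq_prime_sq [Finite Q] (hp : p.Prime)
    (hcard : Nat.card Q = p ^ 2) (hnc : ¬ IsCyclic Q) : IsCombOfProperInductions Q p := by
  classical
  have := Fact.mk hp
  have := IsPGroup.isMulCommutative_of_card_eq_prime_sq hcard
  have := Fintype.ofFinite (Subgroup Q)
  have hord := orderOf_eq_prime_of_card_eq_prime_sq hp hcard hnc
  set L := Finset.univ.filter fun H : Subgroup Q => Nat.card H = p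
  have hsum : ∀ g : Q, ∑ H ∈ L, indTrivChar H g = p * (L.filter (g ∈ ·)).card := fun g => by
    rw [Finset.card_filter, Nat.cast_sum, Finset.mul_sum]
    refine Finset.sum_congr rfl fun H hH => ?_
    have hindex : H.index = p := by
      have := card_mul_index H
      rw [(Finset.mem_filter.mp hH).2, hcard, sq] at this
      exact Nat.eq_of_mul_eq_mul_left hp.pos this
    split_ifs with hg
    · simp [indTrivChar_of_mem_normal hg, hindex]
    · simp [indTrivChar_eq_zero_of_le_normal le_rfl hg]
  refine ⟨∑ H ∈ L, Finsupp.single H 1 - Finsupp.single ⊥ 1, ?_, ?_⟩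
  · have htop : ⊤ ∉ L := by
      simp only [L, Finset.mem_filter, Finset.mem_univ, true_and, card_top, hcard]
      intro h
      nlinarith [hp.two_le]
    have : Nontrivial Q := Finite.one_lt_card_iff_nontrivial.mp (by nlinarith [hp.two_le])
    simp [Finsupp.single_apply, htop]
  · ext g
    simp only [map_sub, map_sum, Finsupp.linearCombination_single, one_smul, Finset.sum_apply,
      Pi.sub_apply, hsum]
    by_cases hg : g = 1
    · subst hg
      rw [indTrivChar_of_mem_normal (one_mem _), index_bot, hcard,
        Finset.filter_true_of_mem fun H _ => one_mem H, card_subgroups_card_eq_prime hp hcard hord]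
      push_cast
      ring
    · have hline : L.filter (g ∈ ·) = {zpowers g} := by
        ext H
        simpa [L] using card_eq_and_mem_iff_eq_zpowers hp hord hg H
      rw [indTrivChar_eq_zero_of_le_normal le_rfl (by simpa using hg), hline]
      simp

end PrimeSquare

section CyclicGroups
variable {G : Type*} [Group G]

theorem index_zpowers_pow [Finite G] {t : G} (ht : ∀ g : G, g ∈ zpowers t) {p : ℕ} (hp0 : p ≠ 0)
    (hp : p ∣ Nat.card G) : (zpowers (t ^ p)).index = p := by
  obtain ⟨k, hk⟩ := hp
  have hord : orderOf t = p * k := (orderOf_eq_card_of_forall_mem_zpowers ht).trans hk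
  have key := card_mul_index (zpowers (t ^ p))
  rw [Nat.card_zpowers, orderOf_pow_of_dvd hp0 (hord ▸ dvd_mul_right p k), hord,
    Nat.mul_div_cancel_left k (Nat.pos_of_ne_zero hp0), hk, mul_comm p] at key
  have hk0 : 0 < k := Nat.pos_of_mul_pos_left (hk ▸ (Nat.card_pos : 0 < Nat.card G))
  exact Nat.eq_of_mul_eq_mul_left hk0 key

theorem forall_mem_zpowers_of_not_mem_zpowers_pow [Finite G] {t : G}
    (ht : ∀ g : G, g ∈ zpowers t) {p r : ℕ} (hp : p.Prime) (hcard : Nat.card G = p ^ r) {x : G}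
    (hx : x ∉ zpowers (t ^ p)) :
    ∀ g : G, g ∈ zpowers x := by
  obtain ⟨k, rfl⟩ := mem_powers_iff_mem_zpowers.mpr (ht x)
  have hpk : ¬ p ∣ k := by
    rintro ⟨l, rfl⟩
    exact hx ⟨l, by simp [pow_mul]⟩
  have hcop : k.Coprime (orderOf t) := by
    rw [orderOf_eq_card_of_forall_mem_zpowers ht, hcard]
    exact Nat.Coprime.pow_right r ((Nat.Prime.coprime_iff_not_dvd hp).mpr hpk).symm
  obtain ⟨m, hm⟩ := exists_pow_eq_self_of_coprime hcop
  have htk : t ∈ zpowers (t ^ k) := by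
    simpa [hm] using pow_mem (mem_zpowers (t ^ k)) m
  exact fun g => zpowers_le.mpr htk (ht g)

theorem isCyclic_of_le_zpowers {K : Subgroup G} [K.Normal] {g : G} (hK : K ≤ zpowers g)
    (hg : ∀ q : G ⧸ K, q ∈ zpowers (g : G ⧸ K)) : IsCyclic G := by
  refine ⟨g, fun x => ?_⟩
  obtain ⟨j, hj⟩ := mem_zpowers_iff.mp (hg x)
  rw [← QuotientGroup.mk_zpow, QuotientGroup.eq] at hj
  exact mem_zpowers_iff.mp (by simpa using mul_mem (zpow_mem (mem_zpowers g) j) (hK hj))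

open scoped IsMulCommutative in
theorem isCyclic_of_isCyclic_quotient_zpowers_pow [IsMulCommutative G] {w : G} {p : ℕ}
    (hw : (w ^ p) ^ p = 1) [IsCyclic (G ⧸ zpowers (w ^ p))] : IsCyclic G := by
  obtain ⟨q, hq⟩ := IsCyclic.exists_generator (α := G ⧸ zpowers (w ^ p))
  obtain ⟨g, rfl⟩ := QuotientGroup.mk_surjective q
  obtain ⟨j, hj⟩ := mem_zpowers_iff.mp (hq w)
  rw [← QuotientGroup.mk_zpow, QuotientGroup.eq] at hj
  obtain ⟨l, hl⟩ := mem_zpowers_iff.mp hj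
  -- `w` is `g ^ j` up to a factor of order `p`, so `w ^ p` is a power of `g`
  have hwp : w ^ p = (g ^ j) ^ p := by
    have hlp : ((w ^ p) ^ l) ^ p = 1 := by
      rw [← zpow_natCast, ← zpow_mul, mul_comm, zpow_mul, zpow_natCast, hw, one_zpow]
    rw [inv_mul_eq_iff_eq_mul.mp hl.symm, mul_pow, hlp, mul_one]
  exact isCyclic_of_le_zpowers (zpowers_le.mpr (hwp ▸ pow_mem (zpow_mem (mem_zpowers g) j) p)) hq

open scoped IsMulCommutative in
theorem isCyclic_of_coprime_card_index [IsMulCommutative G] {A : Subgroup G} [IsCyclic A]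
    [IsCyclic (G ⧸ A)] (h : (Nat.card A).Coprime A.index) : IsCyclic G := by
  have : IsCyclic (QuotientGroup.mk' A).ker := by rwa [QuotientGroup.ker_mk']
  exact Group.isCyclic_of_coprime_card_ker (QuotientGroup.mk' A)
    (by rwa [QuotientGroup.ker_mk', ← index_eq_card]) (QuotientGroup.mk'_surjective A)

end CyclicGroups

section Complement
variable {G : Type*} [Group G]

theorem exists_inv_mul_mul_eq_of_forall_commute [Finite G] {A : Subgroup G} [A.Normal] {s : G}
    (hs : ∀ a ∈ A, a * s = s * a → a = 1) {b : G} (hb : b ∈ A) :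
    ∃ a ∈ A, a⁻¹ * (b * s) * a = s := by
  -- `a ↦ a * s * a⁻¹ * s⁻¹` is an injective, hence surjective, self-map of `A`
  let f : A → A := fun a =>
    ⟨a * (s * (a : G)⁻¹ * s⁻¹), mul_mem a.2 (Normal.conj_mem ‹_› _ (inv_mem a.2) s)⟩
  have hf : Function.Injective f := fun a a' h => by
    have h' : (a : G) * (s * (a : G)⁻¹ * s⁻¹) = a' * (s * (a' : G)⁻¹ * s⁻¹) :=
      congrArg Subtype.val h
    have hcomm : (a' : G)⁻¹ * a * s = s * ((a' : G)⁻¹ * a) :=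
      calc (a' : G)⁻¹ * a * s = (a' : G)⁻¹ * (a * (s * (a : G)⁻¹ * s⁻¹)) * s * a := by group
        _ = (a' : G)⁻¹ * (a' * (s * (a' : G)⁻¹ * s⁻¹)) * s * a := by rw [h']
        _ = s * ((a' : G)⁻¹ * a) := by group
    exact (Subtype.ext (inv_mul_eq_one.mp (hs _ (mul_mem (inv_mem a'.2) a.2) hcomm))).symm
  obtain ⟨a, ha⟩ := (Finite.injective_iff_surjective.mp hf) ⟨b, hb⟩
  have hab : (a : G) * (s * (a : G)⁻¹ * s⁻¹) = b := congrArg Subtype.val ha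
  refine ⟨a, a.2, ?_⟩
  rw [← hab]
  group

theorem normalizer_le_of_isComplement' {A P : Subgroup G} [A.Normal] (hAP : IsComplement' A P)
    (hZ : ∀ a ∈ A, (∀ y ∈ P, a * y = y * a) → a = 1) : normalizer (P : Set G) ≤ P := by
  intro n hn
  obtain ⟨⟨⟨b, hb⟩, ⟨y, hy⟩⟩, rfl, -⟩ := hAP.existsUnique n
  have hbn : b ∈ normalizer (P : Set G) := by
    simpa using (normalizer (P : Set G)).mul_mem hn (inv_mem (le_normalizer hy))
  have hb1 : b = 1 := hZ b hb fun q hq => by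
    have hcomm : b * q * b⁻¹ * q⁻¹ ∈ A ⊓ P := mem_inf.mpr ⟨by
        simpa [mul_assoc] using mul_mem hb (Normal.conj_mem ‹_› _ (inv_mem hb) q),
      mul_mem ((mem_normalizer_iff.mp hbn q).mp hq) (inv_mem hq)⟩
    rw [hAP.disjoint.eq_bot, mem_bot] at hcomm
    exact mul_inv_eq_iff_eq_mul.mp (mul_inv_eq_one.mp hcomm)
  simpa [hb1] using hy

theorem zpowers_eq_of_isComplement' [Finite G] {A P : Subgroup G} [A.Normal]
    (hAP : IsComplement' A P) {y : G} (hy : y ∈ P)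
    (hgen : ∀ q : G ⧸ A, q ∈ zpowers (y : G ⧸ A)) : zpowers y = P := by
  refine eq_of_le_of_card_ge (zpowers_le.mpr hy) ?_
  rw [Nat.card_zpowers, ← hAP.symm.index_eq_card, index_eq_card,
    ← orderOf_eq_card_of_forall_mem_zpowers hgen]
  exact Nat.le_of_dvd (orderOf_pos y) (orderOf_map_dvd (QuotientGroup.mk' A) y)

theorem isCombOfProperInductions_of_isComplement' [Finite G] {p r : ℕ}
    (hp : p.Prime) (hr : r ≠ 0) {A P : Subgroup G} [A.Normal] (hAP : IsComplement' A P)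
    (hA : A ≠ ⊥) (hZ : ∀ a ∈ A, (∀ y ∈ P, a * y = y * a) → a = 1) [IsCyclic (G ⧸ A)]
    (hcard : Nat.card (G ⧸ A) = p ^ r) : IsCombOfProperInductions G p := by
  obtain ⟨t, ht⟩ := IsCyclic.exists_generator (α := G ⧸ A)
  set N := (zpowers (t ^ p)).comap (QuotientGroup.mk' A)
  have hNidx : N.index = p := by
    rw [index_comap_of_surjective _ (QuotientGroup.mk'_surjective A)]
    exact index_zpowers_pow ht hp.ne_zero (hcard ▸ dvd_pow_self p hr)
  have hAN : A ≤ N := fun a ha => by simp [N, (QuotientGroup.eq_one_iff a).mpr ha]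
  have hrel : N.relIndex P = N.index := by
    have hPN : P ⊔ N = ⊤ :=
      top_unique (hAP.sup_eq_top.ge.trans (sup_le (hAN.trans le_sup_right) le_sup_left))
    rw [← relIndex_sup_right, hPN, relIndex_top_right]
  have hN : N ≠ ⊤ := fun h => hp.one_lt.ne' (by rw [← hNidx, h, index_top])
  have hP : P ≠ ⊤ := fun h => hA (isComplement'_top_right.mp (h ▸ hAP))
  have hcomb := isCombOfProperInductions_of_relIndex_eq_index hN hP hrel fun g hg => by
    obtain ⟨⟨⟨b, hb⟩, ⟨y, hy⟩⟩, rfl, -⟩ := hAP.existsUnique g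
    have hmk : ((b * y : G) : G ⧸ A) = y := by
      rw [QuotientGroup.mk_mul, (QuotientGroup.eq_one_iff b).mpr hb, one_mul]
    have hPy : zpowers y = P := zpowers_eq_of_isComplement' hAP hy
      (hmk ▸ forall_mem_zpowers_of_not_mem_zpowers_pow ht hp hcard hg)
    have hcent : ∀ a ∈ A, a * y = y * a → a = 1 := fun a ha hay => hZ a ha fun z hz => by
      obtain ⟨k, rfl⟩ := mem_zpowers_iff.mp (hPy ▸ hz)
      exact (Commute.zpow_right hay k).eq
    obtain ⟨a, -, ha⟩ := exists_inv_mul_mul_eq_of_forall_commute hcent hb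
    exact indTrivChar_eq_one_of_zpowers_conj_eq (normalizer_le_of_isComplement' hAP hZ)
      (ha ▸ hPy)
  rwa [hNidx] at hcomb

end Complement

section QuasiElementary
variable {G : Type*} [Group G] {p : ℕ}

theorem IsPQuasiElementary.of_surjective {G' : Type*} [Group G'] (hp : p.Prime) {f : G →* G'}
    (hf : Function.Surjective f) (h : IsPQuasiElementary p G) : IsPQuasiElementary p G' := by
  obtain ⟨C, hCn, hCc, k, hCk⟩ := h
  refine ⟨C.map f, hCn.map f hf, isCyclic_of_surjective _ (f.subgroupMap_surjective C), ?_⟩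
  obtain ⟨j, -, hj⟩ := (Nat.dvd_prime_pow hp).mp (hCk ▸ index_map_dvd C hf)
  exact ⟨j, hj⟩

theorem IsPQuasiElementary.exists_normal_cyclic_coprime [Finite G] (hp : p.Prime)
    (h : IsPQuasiElementary p G) :
    ∃ A : Subgroup G, A.Normal ∧ IsCyclic A ∧ (Nat.card A).Coprime p ∧ ∃ r, A.index = p ^ r := by
  obtain ⟨C, hCn, hCc, k, hCk⟩ := h
  obtain ⟨c, rfl⟩ := C.isCyclic_iff_exists_zpowers_eq_top.mp hCc
  obtain ⟨v, m, hpm, hcm⟩ := Nat.exists_eq_pow_mul_and_not_dvd (orderOf_pos c).ne' p hp.ne_one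
  have hA : Nat.card (zpowers (c ^ p ^ v)) = m := by
    rw [Nat.card_zpowers, orderOf_pow_of_dvd (pow_ne_zero v hp.ne_zero) (hcm ▸ dvd_mul_right _ _),
      hcm, Nat.mul_div_cancel_left m (pow_pos hp.pos v)]
  refine ⟨zpowers (c ^ p ^ v), ⟨fun a ha g => ?_⟩, inferInstance,
    hA ▸ (Nat.coprime_comm.mp ((Nat.Prime.coprime_iff_not_dvd hp).mpr hpm)), k + v, ?_⟩
  · -- `zpowers (c ^ p ^ v)` consists of the `p ^ v`-th powers of `zpowers c`
    obtain ⟨j, rfl⟩ := mem_zpowers_iff.mp ha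
    obtain ⟨i, hi⟩ := mem_zpowers_iff.mp (hCn.conj_mem _ (zpow_mem (mem_zpowers c) j) g)
    have hpow_comm : ∀ (x : G) (n : ℕ) (l : ℤ), (x ^ n) ^ l = (x ^ l) ^ n := fun x n l => by
      rw [← zpow_natCast, ← zpow_natCast, ← zpow_mul, ← zpow_mul, mul_comm]
    refine mem_zpowers_iff.mpr ⟨i, ?_⟩
    rw [hpow_comm, hi, conj_pow, ← hpow_comm]
  · have hAC : zpowers (c ^ p ^ v) ≤ zpowers c := zpowers_le.mpr (pow_mem (mem_zpowers c) _)
    have hrel := relIndex_mul_relIndex ⊥ _ _ bot_le hAC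
    rw [relIndex_bot_left, relIndex_bot_left, hA, Nat.card_zpowers, hcm, mul_comm (p ^ v),
      Nat.mul_left_cancel_iff (Nat.pos_of_ne_zero (by rintro rfl; simp at hpm))] at hrel
    rw [← relIndex_mul_index hAC, hrel, hCk, pow_add, mul_comm]

end QuasiElementary

section CyclicQuotients
variable {G : Type*} [Group G] [Finite G] {p : ℕ}

theorem pow_eq_one_of_forall_isCyclic_quotient [IsMulCommutative G] (hp : p.Prime)
    (hG : IsPGroup p G) (hnc : ¬ IsCyclic G)
    (hquot : ∀ (K : Subgroup G) [K.Normal], K ≠ ⊥ → IsCyclic (G ⧸ K)) (x : G) : x ^ p = 1 := by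
  have := Fact.mk hp
  by_contra hx
  obtain ⟨i, hi⟩ := IsPGroup.iff_orderOf.mp hG x
  have hi2 : 2 ≤ i := by
    by_contra! hi1
    have : orderOf x ∣ p ^ 1 := hi ▸ pow_dvd_pow p (by omega)
    exact hx (orderOf_dvd_iff_pow_eq_one.mp (by rwa [pow_one] at this))
  set w := x ^ (orderOf x / p ^ 2)
  have hw : orderOf w = p ^ 2 :=
    orderOf_pow_orderOf_div (orderOf_pos x).ne' (hi ▸ pow_dvd_pow p hi2)
  have hwp : w ^ p ≠ 1 := fun h1 => by
    have := orderOf_le_of_pow_eq_one hp.pos h1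
    rw [hw] at this
    nlinarith [hp.two_le]
  have := hquot (zpowers (w ^ p)) (zpowers_eq_bot.not.mpr hwp)
  exact hnc (isCyclic_of_isCyclic_quotient_zpowers_pow (w := w)
    (by rw [← pow_mul, ← sq, ← hw, pow_orderOf_eq_one]))

theorem card_eq_prime_sq_of_forall_isCyclic_quotient [IsMulCommutative G] (hp : p.Prime)
    (hG : IsPGroup p G) (hnc : ¬ IsCyclic G)
    (hquot : ∀ (K : Subgroup G) [K.Normal], K ≠ ⊥ → IsCyclic (G ⧸ K)) : Nat.card G = p ^ 2 := by
  have := Fact.mk hp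
  have hexp := pow_eq_one_of_forall_isCyclic_quotient hp hG hnc hquot
  have : Nontrivial G := not_subsingleton_iff_nontrivial.mp fun _ => hnc inferInstance
  obtain ⟨y, hy⟩ := exists_ne (1 : G)
  have := hquot (zpowers y) (zpowers_eq_bot.not.mpr hy)
  have hK : Nat.card (zpowers y) = p := by
    rw [Nat.card_zpowers]
    exact ((Nat.dvd_prime hp).mp (orderOf_dvd_of_pow_eq_one (hexp y))).resolve_left
      (by simpa using hy)
  have hQ : Nat.card (G ⧸ zpowers y) ∣ p := by
    rw [← IsCyclic.exponent_eq_card]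
    refine Monoid.exponent_dvd_of_forall_pow_eq_one fun q => ?_
    induction q using QuotientGroup.induction_on with
    | _ x => rw [← QuotientGroup.mk_pow, hexp, QuotientGroup.mk_one]
  have hdvd : Nat.card G ∣ p ^ 2 := by
    rw [card_eq_card_quotient_mul_card_subgroup (zpowers y), hK, sq]
    exact mul_dvd_mul_right hQ p
  obtain ⟨j, hj, hGj⟩ := (Nat.dvd_prime_pow hp).mp hdvd
  interval_cases j
  · exact absurd hGj Finite.one_lt_card.ne'
  · exact absurd (isCyclic_of_prime_card (p := p) (by simpa using hGj)) hnc
  · exact hGj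

theorem isCombOfProperInductions_of_forall_isCyclic_quotient (hp : p.Prime)
    (hqe : IsPQuasiElementary p G) (hnc : ¬ IsCyclic G)
    (hquot : ∀ (K : Subgroup G) [K.Normal], K ≠ ⊥ → IsCyclic (G ⧸ K)) :
    IsCombOfProperInductions G p := by
  obtain ⟨A, hAn, hAc, hAp, r, hAr⟩ := hqe.exists_normal_cyclic_coprime hp
  have hcomm : center G ≠ ⊥ → IsMulCommutative G := fun h =>
    have := hquot (center G) h
    isMulCommutative_of_isCyclic_quotient_center_self G
  by_cases hA : A = ⊥
  · have := Fact.mk hp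
    have hG : IsPGroup p G := IsPGroup.of_card (n := r) (by rw [← index_bot, ← hA, hAr])
    have : Nontrivial G := not_subsingleton_iff_nontrivial.mp fun _ => hnc inferInstance
    have := hcomm ((nontrivial_iff_ne_bot _).mp hG.center_nontrivial)
    exact isCombOfProperInductions_of_card_eq_prime_sq hp
      (card_eq_prime_sq_of_forall_isCyclic_quotient hp hG hnc hquot) hnc
  · have := hquot A hA
    have hcop : (Nat.card A).Coprime A.index := hAr ▸ hAp.pow_right r
    obtain ⟨P, hAP⟩ := exists_right_complement'_of_coprime hcop
    have hr : r ≠ 0 := by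
      rintro rfl
      exact hnc (topEquiv.isCyclic.mp (index_eq_one.mp (by simpa using hAr) ▸ hAc))
    refine isCombOfProperInductions_of_isComplement' hp hr hAP hA (fun a ha haP => ?_)
      (index_eq_card A ▸ hAr)
    have hac : a ∈ center G := mem_center_iff.mpr fun g => by
      obtain ⟨⟨⟨b, hb⟩, ⟨y, hy⟩⟩, rfl, -⟩ := hAP.existsUnique g
      have hab : b * a = a * b := congrArg Subtype.val (mul_comm' (⟨b, hb⟩ : A) ⟨a, ha⟩)
      dsimp only
      rw [mul_assoc, ← haP y hy, ← mul_assoc, hab, mul_assoc]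
    by_contra ha1
    have := hcomm fun h => ha1 (by simpa [h] using hac)
    exact hnc (isCyclic_of_coprime_card_index hcop)

end CyclicQuotients

theorem IsPQuasiElementary.isCombOfProperInductions {G : Type*} [Group G] [Finite G] {p : ℕ}
    (hp : p.Prime) (hqe : IsPQuasiElementary p G) (hnc : ¬ IsCyclic G) :
    IsCombOfProperInductions G p := by
  induction hn : Nat.card G using Nat.strong_induction_on generalizing G with
  | _ n ih =>
  by_cases hquot : ∀ (K : Subgroup G) [K.Normal], K ≠ ⊥ → IsCyclic (G ⧸ K)
  · exact isCombOfProperInductions_of_forall_isCyclic_quotient hp hqe hnc hquot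
  · push Not at hquot
    obtain ⟨K, hK, hKbot, hKnc⟩ := hquot
    have hlt : Nat.card (G ⧸ K) < n := by
      rw [← hn, card_eq_card_quotient_mul_card_subgroup K]
      exact lt_mul_of_one_lt_right Nat.card_pos ((one_lt_card_iff_ne_bot K).mpr hKbot)
    exact (ih _ hlt (hqe.of_surjective hp (QuotientGroup.mk'_surjective K)) hKnc rfl).of_surjective
      (QuotientGroup.mk'_surjective K)

/-- If `G` is `p`-quasi-elementary and not cyclic, then `p · 1_G` is a
`ℤ`-linear combination of characters induced from trivial characters of proper
subgroups. -/
theorem p_mul_triv_is_combination_of_proper_inductions (G : Type*) [Group G] [Finite G]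
    (p : ℕ) (hp : p.Prime) (hqe : IsPQuasiElementary p G) (hnc : ¬ IsCyclic G) :
    ∃ c : Subgroup G →₀ ℤ,
      (∀ H ∈ c.support, H ≠ ⊤) ∧
      ∀ g : G, (c.sum fun H n => n * indTrivChar H g) = (p : ℤ) := by
  obtain ⟨c, htop, hc⟩ := hqe.isCombOfProperInductions hp hnc
  refine ⟨c, fun H hH h => Finsupp.mem_support_iff.mp hH (h ▸ htop), fun g => ?_⟩
  have := congrFun hc g
  simpa only [Finsupp.linearCombination_apply, Finsupp.sum, Finset.sum_apply, Pi.smul_apply,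
    smul_eq_mul] using this
end

section
/- Let G be a finite group that is p-quasi-elementary for a prime p. Then the trivial character 1_G is not a ℤ-linear combination of the induced characters Ind_H^G 1_H over proper subgroups H < G. -/
/-- If `G` is `p`-quasi-elementary, then the trivial character of `G` is not
a `ℤ`-linear combination of characters induced from trivial characters of proper
subgroups. -/
theorem triv_not_combination_of_proper_inductions (G : Type*) [Group G] [Finite G]
    (p : ℕ) (hp : p.Prime) (hqe : IsPQuasiElementary p G) :
    ¬ ∃ c : Subgroup G →₀ ℤ,
        (∀ H ∈ c.support, H ≠ ⊤) ∧
        ∀ g : G, (c.sum fun H n => n * indTrivChar H g) = 1 := by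
  rintro ⟨c, hproper, hsum⟩
  obtain ⟨C, hN, hCyc, k, hk⟩ := hqe
  -- get a generator g of C
  obtain ⟨⟨g, hgC⟩, hgen⟩ := hCyc.exists_generator
  have hCg : Subgroup.zpowers g = C := by
    apply le_antisymm (Subgroup.zpowers_le.mpr hgC)
    intro x hx
    obtain ⟨n, hn⟩ := hgen ⟨x, hx⟩
    exact ⟨n, congrArg Subtype.val hn⟩
  -- if a conjugate of g lies in H, then C ≤ H
  have key : ∀ (H : Subgroup G) (y : G), y⁻¹ * g * y ∈ H → C ≤ H := by
    intro H y hy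
    have hmemC : y⁻¹ * g * y ∈ C := by
      have := hN.conj_mem g hgC y⁻¹
      simpa using this
    have hord : orderOf (y⁻¹ * g * y) = orderOf g := by
      have h : SemiconjBy y⁻¹ g (y⁻¹ * g * y) := by
        unfold SemiconjBy; group
      exact (h.orderOf_eq).symm
    have hle : Subgroup.zpowers (y⁻¹ * g * y) ≤ C :=
      Subgroup.zpowers_le.mpr hmemC
    have hcard : Nat.card C ≤ Nat.card (Subgroup.zpowers (y⁻¹ * g * y)) := by
      rw [Nat.card_zpowers, hord, ← Nat.card_zpowers, hCg]
    have heq : Subgroup.zpowers (y⁻¹ * g * y) = C :=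
      Subgroup.eq_of_le_of_card_ge hle hcard
    rw [← heq]
    exact Subgroup.zpowers_le.mpr hy
  -- each induced character value at g from a proper subgroup is divisible by p
  have hdvd : ∀ H ∈ c.support, (p : ℤ) ∣ indTrivChar H g := by
    intro H hH
    by_cases hCH : C ≤ H
    · -- every coset is fixed
      have hfix : ∀ x : G ⧸ H, g • x = x := by
        intro x
        induction x using QuotientGroup.induction_on with
        | _ y =>
          show ((g * y : G) : G ⧸ H) = (y : G ⧸ H)
          rw [QuotientGroup.eq]
          have : y⁻¹ * g⁻¹ * y ∈ C := by
            have := hN.conj_mem g⁻¹ (inv_mem hgC) y⁻¹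
            simpa using this
          have h2 : (g * y)⁻¹ * y ∈ H := by
            have := hCH this
            simpa [mul_assoc] using this
          exact h2
      have : indTrivChar H g = (H.index : ℤ) := by
        unfold indTrivChar
        rw [Subgroup.index]
        congr 1
        exact Nat.card_congr (Equiv.subtypeUnivEquiv hfix)
      rw [this]
      -- H.index divides p ^ k and is ≠ 1
      have hdvd' : H.index ∣ p ^ k := hk ▸ Subgroup.index_dvd_of_le hCH
      obtain ⟨j, hj, hje⟩ := (Nat.dvd_prime_pow hp).mp hdvd'
      have hj0 : j ≠ 0 := by
        rintro rfl
        exact hproper H hH (Subgroup.index_eq_one.mp (by simpa using hje))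
      have : p ∣ H.index := hje ▸ dvd_pow_self p hj0
      exact_mod_cast Int.natCast_dvd_natCast.mpr this
    · -- no coset is fixed
      have : IsEmpty {x : G ⧸ H // g • x = x} := by
        constructor
        rintro ⟨x, hx⟩
        induction x using QuotientGroup.induction_on with
        | _ y =>
          have hx' : ((g * y : G) : G ⧸ H) = (y : G ⧸ H) := hx
          rw [QuotientGroup.eq] at hx'
          have h1 : y⁻¹ * g⁻¹ * y ∈ H := by simpa [mul_assoc] using hx'
          have h2 : y⁻¹ * g * y ∈ H := by
            have := inv_mem h1
            simpa [mul_assoc] using this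
          exact hCH (key H y h2)
      unfold indTrivChar
      rw [Nat.card_of_isEmpty]
      simp
  -- conclude
  have hdvdsum : (p : ℤ) ∣ c.sum fun H n => n * indTrivChar H g :=
    Finset.dvd_sum fun H hH => Dvd.dvd.mul_left (hdvd H hH) _
  rw [hsum g] at hdvdsum
  have := Int.le_of_dvd one_pos hdvdsum
  have := hp.one_lt
  omega
end

section
/- Let p and l be distinct primes, k ≥ 1, and let G = C_l ⋊ C_{p^k} be a semidirect product of a cyclic group C_l of order l by a cyclic group C_{p^k} of order p^k acting faithfully on C_l. Writing C_{p^{k-1}} for the index-p subgroup of the complement C_{p^k}, the combination C_{p^{k-1}} − p·C_{p^k} − (C_l ⋊ C_{p^{k-1}}) + p·G is a Brauer relation in G, i.e. Ind_{C_{p^{k-1}}}^G 1 − p·Ind_{C_{p^k}}^G 1 − Ind_{C_l ⋊ C_{p^{k-1}}}^G 1 + p·1_G = 0. -/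
namespace Subgroup

variable {G : Type*} [Group G]

theorem smul_coe_eq_self_iff (H : Subgroup G) (g x : G) :
    g • (x : G ⧸ H) = x ↔ x⁻¹ * g * x ∈ H := by
  rw [← H.inv_mem_iff]
  change ((g * x : G) : G ⧸ H) = x ↔ _
  rw [QuotientGroup.eq]
  group

theorem card_fixed_quotient_mul_card (H : Subgroup G) (g : G) :
    Nat.card {q : G ⧸ H // g • q = q} * Nat.card H = {x : G | x⁻¹ * g * x ∈ H}.ncard := by
  calc Nat.card {q : G ⧸ H // g • q = q} * Nat.card H
      = Nat.card {y : (G ⧸ H) × H // g • y.1 = y.1} := by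
        rw [← Nat.card_prod]
        exact (Nat.card_congr Equiv.prodSubtypeFstEquivSubtypeProd).symm
    _ = Nat.card {x : G // g • (x : G ⧸ H) = x} :=
        Nat.card_congr (H.groupEquivQuotientProdSubgroup.subtypeEquiv fun _ => Iff.rfl).symm
    _ = {x : G | x⁻¹ * g * x ∈ H}.ncard := by
        simp_rw [smul_coe_eq_self_iff]
        rfl

theorem indTrivChar_mul_card (H : Subgroup G) (g : G) :
    indTrivChar H g * Nat.card H = {x : G | x⁻¹ * g * x ∈ H}.ncard := by
  rw [indTrivChar, ← card_fixed_quotient_mul_card, Nat.cast_mul]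

theorem indTrivChar_top (g : G) : indTrivChar (⊤ : Subgroup G) g = 1 := by
  have := QuotientGroup.subsingleton_quotient_top (G := G)
  rw [indTrivChar, Nat.cast_eq_one, Nat.card_eq_one_iff_unique]
  exact ⟨inferInstance, ⟨⟨(1 : G), Subsingleton.elim _ _⟩⟩⟩

theorem card_sup_of_normal_of_disjoint {N H : Subgroup G} [N.Normal] (h : Disjoint N H) :
    Nat.card (N ⊔ H : Subgroup G) = Nat.card N * Nat.card H := by
  rw [← relIndex_bot_left, ← relIndex_mul_relIndex ⊥ N _ bot_le le_sup_left, relIndex_bot_left,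
    relIndex_sup_left, ← inf_relIndex_right, h.eq_bot, relIndex_bot_left]

theorem card_eq_card_mul_relIndex {H K : Subgroup G} (hHK : H ≤ K) :
    Nat.card K = Nat.card H * H.relIndex K := by
  rw [← relIndex_bot_left, ← relIndex_bot_left, relIndex_mul_relIndex ⊥ H K bot_le hHK]

def ConjFixedPointFree (P C : Subgroup G) : Prop :=
  ∀ h ∈ P, h ≠ 1 → ∀ d ∈ C, h * d * h⁻¹ = d → d = 1

theorem conj_eq_self_of_card_eq_prime {C : Subgroup G} {l : ℕ} [Fact l.Prime]
    (hC : Nat.card C = l) {d h : G} (hd : d ∈ C) (hd1 : d ≠ 1) (hhd : h * d * h⁻¹ = d)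
    {c : G} (hc : c ∈ C) : h * c * h⁻¹ = c := by
  obtain ⟨n, hn⟩ := mem_zpowers_iff.mp <|
    mem_zpowers_of_prime_card hC (g := (⟨d, hd⟩ : C)) (g' := ⟨c, hc⟩) (Subtype.coe_ne_coe.mp hd1)
  have hn' : d ^ n = c := by simpa using congrArg Subtype.val hn
  rw [← hn', ← conj_zpow, hhd]

variable {C P Q : Subgroup G}

theorem conjFixedPointFree_of_card_eq_prime {l : ℕ} (hl : l.Prime) (hC : Nat.card C = l)
    (hfaith : ∀ x ∈ P, (∀ c ∈ C, x * c * x⁻¹ = c) → x = 1) : ConjFixedPointFree P C := by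
  have := Fact.mk hl
  intro h hh hh1 d hd hhd
  by_contra hd1
  exact hh1 (hfaith h hh fun c hc => conj_eq_self_of_card_eq_prime hC hd hd1 hhd hc)

variable [C.Normal]

theorem mul_mem_sup_iff (hdisj : Disjoint C P) (hQ : Q ≤ P) {c h : G} (hc : c ∈ C)
    (hh : h ∈ P) : c * h ∈ C ⊔ Q ↔ h ∈ Q := by
  refine ⟨fun hmem => ?_, fun hq => mul_mem (mem_sup_left hc) (mem_sup_right hq)⟩
  rw [← SetLike.mem_coe, normal_mul] at hmem
  obtain ⟨c', hc', q, hq, hcq⟩ := Set.mem_mul.mp hmem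
  have hhq : h * q⁻¹ = c⁻¹ * c' := by
    rw [mul_inv_eq_iff_eq_mul, mul_assoc, hcq, inv_mul_cancel_left]
  have : h * q⁻¹ = 1 := disjoint_def.mp hdisj (hhq ▸ mul_mem (inv_mem hc) hc')
    (mul_mem hh (inv_mem (hQ hq)))
  rwa [mul_inv_eq_one.mp this]

theorem conj_mem_sup_iff (hdisj : Disjoint C P) (hQ : Q ≤ P) {d h : G} (hd : d ∈ C)
    (hh : h ∈ P) : d⁻¹ * h * d ∈ C ⊔ Q ↔ h ∈ Q := by
  rw [show d⁻¹ * h * d = d⁻¹ * (h * d * h⁻¹) * h by group]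
  exact mul_mem_sup_iff hdisj hQ (mul_mem (inv_mem hd) (Normal.conj_mem ‹_› d hd h)) hh

theorem eq_one_of_conj_mem (hdisj : Disjoint C P) {h : G} (hh : h ∈ P)
    (hfree : ∀ d ∈ C, h * d * h⁻¹ = d → d = 1) {e : G} (he : e ∈ C) (hconj : e⁻¹ * h * e ∈ P) :
    e = 1 := by
  refine hfree e he ?_
  have : e⁻¹ * (h * e * h⁻¹) = 1 := disjoint_def.mp hdisj
    (mul_mem (inv_mem he) (Normal.conj_mem ‹_› e he h))
    (by rw [show e⁻¹ * (h * e * h⁻¹) = e⁻¹ * h * e * h⁻¹ by group]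
        exact mul_mem hconj (inv_mem hh))
  rw [← mul_right_inj e⁻¹, this, inv_mul_cancel]

theorem exists_conj_eq_mul [Finite C] {h : G} (hfree : ∀ d ∈ C, h * d * h⁻¹ = d → d = 1)
    {c : G} (hc : c ∈ C) : ∃ d ∈ C, d⁻¹ * h * d = c * h := by
  let τ : C → C := fun d =>
    ⟨d⁻¹ * (h * d * h⁻¹), mul_mem (inv_mem d.2) (Normal.conj_mem ‹_› _ d.2 h)⟩
  have hτ : Function.Injective τ := by
    rintro ⟨u, hu⟩ ⟨v, hv⟩ huv
    have huv' : u⁻¹ * (h * u * h⁻¹) = v⁻¹ * (h * v * h⁻¹) := congrArg Subtype.val huv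
    have := hfree (v * u⁻¹) (mul_mem hv (inv_mem hu)) <| by
      calc h * (v * u⁻¹) * h⁻¹ = v * (v⁻¹ * (h * v * h⁻¹)) * (h * u * h⁻¹)⁻¹ := by group
        _ = v * u⁻¹ := by rw [← huv']; group
    exact Subtype.ext (mul_inv_eq_one.mp this).symm
  obtain ⟨⟨d, hd⟩, hτd⟩ := Finite.surjective_of_injective hτ ⟨c, hc⟩
  have hτd' : d⁻¹ * (h * d * h⁻¹) = c := congrArg Subtype.val hτd
  exact ⟨d, hd, by rw [← hτd']; group⟩

theorem exists_conj_mem_of_not_mem_sup [Finite C] (hcomp : C.IsComplement' P)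
    (hfree : ConjFixedPointFree P C) {y : G} (hy : y ∉ C ⊔ Q) :
    ∃ d ∈ C, d * y * d⁻¹ ∈ P ∧ d * y * d⁻¹ ∉ Q := by
  obtain ⟨⟨⟨c, hc⟩, ⟨h, hh⟩⟩, rfl⟩ := (hcomp.existsUnique y).exists
  have hhQ : h ∉ Q := fun hq => hy (mul_mem (mem_sup_left hc) (mem_sup_right hq))
  obtain ⟨d, hd, hdh⟩ := exists_conj_eq_mul (hfree h hh fun h1 => hhQ (h1 ▸ Q.one_mem)) hc
  have hconj : d * (c * h) * d⁻¹ = h := by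
    rw [← hdh]
    group
  refine ⟨d, hd, ?_⟩
  simp only [hconj]
  exact ⟨hh, hhQ⟩

variable [Finite G]

theorem ncard_conj_not_mem_sup (hcomp : C.IsComplement' P)
    (hfree : ConjFixedPointFree P C) (hQ : Q ≤ P) (g : G) :
    {x : G | x⁻¹ * g * x ∉ C ⊔ Q}.ncard
      = Nat.card C * ({x : G | x⁻¹ * g * x ∈ P} \ {x | x⁻¹ * g * x ∈ Q}).ncard := by
  set A := {x : G | x⁻¹ * g * x ∈ P} \ {x | x⁻¹ * g * x ∈ Q}
  have conj_mul : ∀ x d : G, (x * d)⁻¹ * g * (x * d) = d⁻¹ * (x⁻¹ * g * x) * d :=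
    fun _ _ => by group
  let f : C × A → {x : G | x⁻¹ * g * x ∉ C ⊔ Q} := fun dx =>
    ⟨dx.2 * dx.1, by
      rw [Set.mem_ofPred_eq, conj_mul, conj_mem_sup_iff hcomp.disjoint hQ dx.1.2 dx.2.2.1]
      exact dx.2.2.2⟩
  have hf : Function.Bijective f := by
    constructor
    · rintro ⟨⟨d, hd⟩, ⟨x, hxP, hxQ⟩⟩ ⟨⟨d', hd'⟩, ⟨x', hx'P, _⟩⟩ hxd
      have hx' : x' = x * (d * d'⁻¹) := by
        rw [← mul_assoc, eq_mul_inv_iff_mul_eq]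
        exact (congrArg Subtype.val hxd).symm
      have hdd' : d * d'⁻¹ = 1 := by
        refine eq_one_of_conj_mem hcomp.disjoint hxP (hfree _ hxP ?_) (mul_mem hd (inv_mem hd')) ?_
        · intro h1
          exact hxQ (show x⁻¹ * g * x ∈ Q from h1 ▸ Q.one_mem)
        · rw [← conj_mul, ← hx']
          exact hx'P
      obtain rfl : d = d' := mul_inv_eq_one.mp hdd'
      obtain rfl : x = x' := by rw [hx', hdd', mul_one]
      rfl
    · rintro ⟨y, hy⟩
      obtain ⟨d, hd, hdP, hdQ⟩ := exists_conj_mem_of_not_mem_sup hcomp hfree hy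
      have hA : y * d⁻¹ ∈ A := by
        rw [Set.mem_sdiff, Set.mem_ofPred_eq, Set.mem_ofPred_eq, conj_mul, inv_inv]
        exact ⟨hdP, hdQ⟩
      exact ⟨(⟨d, hd⟩, ⟨y * d⁻¹, hA⟩), Subtype.ext (inv_mul_cancel_right y d)⟩
  rw [← Nat.card_coe_set_eq, ← Nat.card_coe_set_eq, ← Nat.card_prod]
  exact (Nat.card_congr (Equiv.ofBijective f hf)).symm

theorem ncard_conj_mem_sup_add (hcomp : C.IsComplement' P)
    (hfree : ConjFixedPointFree P C) (hQ : Q ≤ P) (g : G) :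
    {x : G | x⁻¹ * g * x ∈ C ⊔ Q}.ncard + Nat.card C * {x : G | x⁻¹ * g * x ∈ P}.ncard
      = Nat.card C * {x : G | x⁻¹ * g * x ∈ Q}.ncard + Nat.card G := by
  have hG := Set.ncard_add_ncard_compl {x : G | x⁻¹ * g * x ∈ C ⊔ Q}
  have hP := Set.ncard_sdiff_add_ncard_of_subset
    (show {x : G | x⁻¹ * g * x ∈ Q} ⊆ {x | x⁻¹ * g * x ∈ P} from fun _ hx => hQ hx)
  rw [Set.compl_ofPred] at hG
  rw [← hP, mul_add, ← ncard_conj_not_mem_sup hcomp hfree hQ g, ← hG]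
  omega

theorem indTrivChar_relation_of_fixedPointFree (hcomp : C.IsComplement' P)
    (hfree : ConjFixedPointFree P C) (hQ : Q ≤ P) (g : G) :
    indTrivChar Q g - (Q.relIndex P : ℤ) * indTrivChar P g - indTrivChar (C ⊔ Q) g
      + (Q.relIndex P : ℤ) * indTrivChar ⊤ g = 0 := by
  have hcount : indTrivChar (C ⊔ Q) g * Nat.card (C ⊔ Q : Subgroup G)
      + Nat.card C * (indTrivChar P g * Nat.card P)
      = Nat.card C * (indTrivChar Q g * Nat.card Q) + Nat.card G := by
    simp only [indTrivChar_mul_card]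
    exact_mod_cast ncard_conj_mem_sup_add hcomp hfree hQ g
  rw [card_sup_of_normal_of_disjoint (hcomp.disjoint.mono_right hQ),
    card_eq_card_mul_relIndex hQ, ← hcomp.card_mul_card, card_eq_card_mul_relIndex hQ] at hcount
  push_cast at hcount
  have hCQ : (Nat.card C * Nat.card Q : ℤ) ≠ 0 := by
    have := Nat.card_pos (α := C)
    have := Nat.card_pos (α := Q)
    positivity
  refine (mul_eq_zero.mp ?_).resolve_left hCQ
  rw [indTrivChar_top]
  linear_combination -hcount

end Subgroup

theorem brauer_relation_of_semidirect_general (G : Type*) [Group G] [Finite G]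
    (p l k : ℕ) (hl : l.Prime) (hk : 1 ≤ k)
    (C P : Subgroup G) [C.Normal] (hcomp : Subgroup.IsComplement' C P)
    (hC : Nat.card C = l) (hP : Nat.card P = p ^ k)
    (hfaith : ∀ x ∈ P, (∀ c ∈ C, x * c * x⁻¹ = c) → x = 1)
    (P' : Subgroup G) (hP'le : P' ≤ P) (hP'card : Nat.card P' = p ^ (k - 1)) :
    ∀ g : G,
      indTrivChar P' g - (p : ℤ) * indTrivChar P g - indTrivChar (C ⊔ P') g
        + (p : ℤ) * indTrivChar (⊤ : Subgroup G) g = 0 := by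
  intro g
  have hindex : P'.relIndex P = p := by
    have hcard := Subgroup.card_eq_card_mul_relIndex hP'le
    rw [hP, hP'card, ← Nat.sub_add_cancel hk, pow_succ, Nat.add_sub_cancel] at hcard
    exact (Nat.eq_of_mul_eq_mul_left (hP'card ▸ Nat.card_pos) hcard).symm
  have hfree := Subgroup.conjFixedPointFree_of_card_eq_prime hl hC hfaith
  simpa only [hindex] using Subgroup.indTrivChar_relation_of_fixedPointFree hcomp hfree hP'le g

/-- In `G = C_l ⋊ C_{p^k}` (distinct primes `p ≠ l`, faithful action,
`k ≥ 1`), writing `P' = C_{p^{k-1}}` for the index-`p` subgroup of the complement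
`P = C_{p^k}`, the combination `P' − p·P − (C ⊔ P') + p·G` is a Brauer relation:
`Ind_{P'}^G 1 − p·Ind_P^G 1 − Ind_{C ⊔ P'}^G 1 + p·Ind_G^G 1 = 0`. -/
theorem brauer_relation_of_semidirect (G : Type*) [Group G] [Finite G]
    (p l k : ℕ) (hp : p.Prime) (hl : l.Prime) (hne : p ≠ l) (hk : 1 ≤ k)
    (C P : Subgroup G) [C.Normal] (hcomp : Subgroup.IsComplement' C P)
    (hC : Nat.card C = l) (hPcyc : IsCyclic P) (hP : Nat.card P = p ^ k)
    (hfaith : ∀ x ∈ P, (∀ c ∈ C, x * c * x⁻¹ = c) → x = 1)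
    (P' : Subgroup G) (hP'le : P' ≤ P) (hP'card : Nat.card P' = p ^ (k - 1)) :
    ∀ g : G,
      indTrivChar P' g - (p : ℤ) * indTrivChar P g - indTrivChar (C ⊔ P') g
        + (p : ℤ) * indTrivChar (⊤ : Subgroup G) g = 0 :=
  brauer_relation_of_semidirect_general G p l k hl hk C P hcomp hC hP hfaith P' hP'le hP'card
end

section
/- Let G be a finite group with a cyclic normal subgroup C ⊴ G of p-power index (p prime), and let ∑_H n_H H be a Brauer relation in G. Then ∑_{H : H ⊇ C} n_H [G : H] = 0, where the sum runs over the subgroups H of G containing C. -/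
open scoped Classical in
private theorem indTrivChar_eq_of_gen {G : Type*} [Group G] [Finite G] (C : Subgroup G)
    [C.Normal] (g : G) (hgen : Subgroup.zpowers g = C) (H : Subgroup G) :
    indTrivChar H g = if C ≤ H then (H.index : ℤ) else 0 := by
  unfold indTrivChar
  split_ifs with h
  · have hfix : ∀ x : G ⧸ H, g • x = x := by
      intro x
      obtain ⟨y, rfl⟩ := QuotientGroup.mk_surjective x
      rw [MulAction.Quotient.smul_mk, QuotientGroup.eq]
      have : y⁻¹ * g * y ∈ C := Subgroup.Normal.conj_mem' ‹C.Normal› g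
        (hgen ▸ Subgroup.mem_zpowers g) y
      have : y⁻¹ * g * y ∈ H := h this
      simpa [mul_assoc, smul_eq_mul] using inv_mem this
    rw [Nat.card_congr (Equiv.subtypeUnivEquiv hfix)]
    rfl
  · have : IsEmpty {x : G ⧸ H // g • x = x} := by
      constructor
      rintro ⟨x, hx⟩
      obtain ⟨y, rfl⟩ := QuotientGroup.mk_surjective x
      rw [MulAction.Quotient.smul_mk, QuotientGroup.eq] at hx
      have hc : y⁻¹ * g * y ∈ H := by
        have := inv_mem hx
        simpa [smul_eq_mul, mul_assoc] using this
      apply h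
      intro z hz
      have hz' : y * z * y⁻¹ ∈ Subgroup.zpowers g := by
        rw [hgen]
        exact Subgroup.Normal.conj_mem ‹C.Normal› z hz y
      obtain ⟨n, hn⟩ := hz'
      simp only at hn
      have h1 : (y⁻¹ * g * y⁻¹⁻¹) ^ n = y⁻¹ * g ^ n * y⁻¹⁻¹ := conj_zpow
      simp only [inv_inv] at h1
      have hzz : z = (y⁻¹ * g * y) ^ n := by
        rw [h1, hn]; group
      rw [hzz]
      exact zpow_mem hc n
    simp [Nat.card_of_isEmpty]

open scoped Classical in
/-- If `G` has a cyclic normal subgroup `C` of `p`-power index and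
`∑_H n_H H` is a Brauer relation in `G`, then `∑_{H ⊇ C} n_H [G : H] = 0`. -/
theorem sum_over_subgroups_containing_C (G : Type*) [Group G] [Finite G]
    (p : ℕ) (hp : p.Prime) (C : Subgroup G) [C.Normal] (hcyc : IsCyclic C)
    (hidx : ∃ k : ℕ, C.index = p ^ k)
    (c : Subgroup G →₀ ℤ) (hc : IsBrauerRelation c) :
    (c.sum fun H n => if C ≤ H then n * (H.index : ℤ) else 0) = 0 := by
  obtain ⟨⟨g, hgC⟩, hg⟩ := hcyc.exists_generator
  have hgen : Subgroup.zpowers g = C := by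
    refine le_antisymm (Subgroup.zpowers_le.2 hgC) fun x hx => ?_
    obtain ⟨n, hn⟩ := hg ⟨x, hx⟩
    exact ⟨n, congrArg Subtype.val hn⟩
  have heq : (c.sum fun H n => if C ≤ H then n * (H.index : ℤ) else 0)
      = c.sum fun H n => n * indTrivChar H g :=
    Finsupp.sum_congr fun H _ => by
      rw [indTrivChar_eq_of_gen C g hgen H]; split_ifs <;> ring
  rw [heq, hc g]
end

section
/- Let G be a finite group that is p-quasi-elementary for a prime p, and let ∑_H n_H H be a Brauer relation in G. Then p divides n_G (the coefficient of G itself). In particular, n_G ≠ 1. -/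
lemma indTrivChar_of_not_le {G : Type*} [Group G] {C H : Subgroup G} [C.Normal]
    {x : G} (hx : Subgroup.zpowers x = C) (h : ¬ C ≤ H) : indTrivChar H x = 0 := by
  have : IsEmpty {q : G ⧸ H // x • q = q} := by
    constructor
    rintro ⟨q, hq⟩
    induction q using QuotientGroup.induction_on with
    | H y =>
      rw [MulAction.Quotient.smul_coe, QuotientGroup.eq] at hq
      -- hq : (x • y)⁻¹ * y ∈ H, i.e. y⁻¹ * x⁻¹ * y ∈ H
      have hmem : y⁻¹ * x * y ∈ H := by
        have := H.inv_mem hq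
        simpa [mul_assoc] using this
      apply h
      intro z hz
      have hz' : y * z * y⁻¹ ∈ C := Subgroup.Normal.conj_mem ‹C.Normal› z hz y
      rw [← hx] at hz'
      obtain ⟨n, hn⟩ := hz'
      have hn' : x ^ n = y * z * y⁻¹ := hn
      have key : (y⁻¹ * x * y) ^ n = y⁻¹ * x ^ n * y := by
        have h2 := map_zpow (MulAut.conj y⁻¹) x n
        simp only [MulAut.conj_apply, inv_inv] at h2
        rw [← h2]
      have : z = (y⁻¹ * x * y) ^ n := by rw [key, hn']; group
      rw [this]
      exact Subgroup.zpow_mem H hmem n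
  simp [indTrivChar, Nat.card_of_isEmpty]

lemma indTrivChar_of_le {G : Type*} [Group G] {C H : Subgroup G} [C.Normal]
    {x : G} (hxC : x ∈ C) (h : C ≤ H) : indTrivChar H x = (H.index : ℤ) := by
  have hall : ∀ q : G ⧸ H, x • q = q := by
    intro q
    induction q using QuotientGroup.induction_on with
    | H y =>
      rw [MulAction.Quotient.smul_coe, QuotientGroup.eq]
      have : y⁻¹ * x⁻¹ * y ∈ C :=
        Subgroup.Normal.conj_mem' ‹C.Normal› _ (C.inv_mem hxC) y
      simpa [mul_assoc] using h this
  unfold indTrivChar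
  rw [Nat.card_congr (Equiv.subtypeUnivEquiv hall)]
  rfl

/-- If `G` is `p`-quasi-elementary and `∑_H n_H H` is a Brauer relation
in `G`, then `p` divides the coefficient `n_G` of `G` itself; in particular `n_G ≠ 1`. -/
theorem p_dvd_coeff_of_top (G : Type*) [Group G] [Finite G]
    (p : ℕ) (hp : p.Prime) (hqe : IsPQuasiElementary p G)
    (c : Subgroup G →₀ ℤ) (hc : IsBrauerRelation c) :
    (p : ℤ) ∣ c ⊤ ∧ c ⊤ ≠ 1 := by
  classical
  obtain ⟨C, hnorm, hcyc, k, hk⟩ := hqe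
  obtain ⟨g, hg⟩ := hcyc.exists_generator
  set x : G := (g : G) with hxdef
  have hx : Subgroup.zpowers x = C := by
    ext z
    constructor
    · rintro ⟨n, rfl⟩
      exact C.zpow_mem g.2 n
    · intro hz
      obtain ⟨n, hn⟩ := hg ⟨z, hz⟩
      exact ⟨n, congrArg Subtype.val hn⟩
  have hdvd : (p : ℤ) ∣ c ⊤ := by
    by_cases htop : (⊤ : Subgroup G) ∈ c.support
    · have hsum := hc x
      rw [Finsupp.sum] at hsum
      rw [← Finset.add_sum_erase _ _ htop] at hsum
      have htopval : indTrivChar (⊤ : Subgroup G) x = 1 := by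
        rw [indTrivChar_of_le g.2 le_top, Subgroup.index_top]; rfl
      rw [htopval, mul_one] at hsum
      have hrest : (p : ℤ) ∣ ∑ H ∈ c.support.erase ⊤, c H * indTrivChar H x := by
        apply Finset.dvd_sum
        intro H hH
        have hHne : H ≠ ⊤ := (Finset.mem_erase.mp hH).1
        by_cases hle : C ≤ H
        · rw [indTrivChar_of_le g.2 hle]
          have h1 : H.index ∣ p ^ k := hk ▸ Subgroup.index_dvd_of_le hle
          obtain ⟨j, hj_le, hj⟩ := (Nat.dvd_prime_pow hp).mp h1
          have hj0 : j ≠ 0 := by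
            rintro rfl
            exact hHne (Subgroup.index_eq_one.mp (by simpa using hj))
          have : p ∣ H.index := hj ▸ dvd_pow_self p hj0
          exact Dvd.dvd.mul_left (Int.natCast_dvd_natCast.mpr this) _
        · rw [indTrivChar_of_not_le hx hle, mul_zero]; exact dvd_zero _
      have : c ⊤ = -∑ H ∈ c.support.erase ⊤, c H * indTrivChar H x := by linarith
      rw [this]
      exact hrest.neg_right
    · rw [Finsupp.notMem_support_iff.mp htop]
      exact dvd_zero _
  refine ⟨hdvd, ?_⟩
  rintro h1
  rw [h1] at hdvd
  have : p ∣ 1 := Int.natCast_dvd_natCast.mp (by simpa using hdvd)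
  exact hp.one_lt.ne' (Nat.dvd_one.mp this)
end
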